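/- Let R be a commutative ring with identity and n ≥ 2. Let Q be a T_n-projective functor and let φ : Q → L_n be a natural linear transformation. Then there exists a natural linear transformation φ̃ : Q → T_n such that φ = β_n ∘ φ̃, where β_n : T_n → L_n denotes the natural surjection given at each R-module V by a_1⊗⋯⊗a_n ↦ [[a_1,a_2],…,a_n]. -/

import Mathlib

/-!
Let `A` be free on `e₁, …, eₙ` and `E = e₁ ⊗ ⋯ ⊗ eₙ`. A natural endomorphism `η` of `T_n` is
determined by `t = η E`: naturality under the map killing `e_m` shows that only the multilinear
words `e_{σ 1} ⊗ ⋯ ⊗ e_{σ n}` occur in `t`, and naturality under `eᵢ ↦ aᵢ` then shows that `η` is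
substitution of `a₁, …, aₙ` into `t` (`cpair t`). Applied to `η = φ ∘ r`, this gives `t ∈ L_n(A)`,
say `t = β u`. Substitution commutes with `β`, which is built from position permutations, so
`ψ = cpair u ∘ s` is natural and `β ∘ ψ = φ ∘ r ∘ s = φ`.
-/

open scoped TensorProduct
open PiTensorProduct

noncomputable section

universe u

variable (R : Type u) [CommRing R]

/-- The operator on the `n`-th tensor power of `V` permuting the tensor positions
according to `σ`. -/
def pact (V : Type u) [AddCommGroup V] [Module R V] (n : ℕ) (σ : Equiv.Perm (Fin n)) :
    (⨂[R]^n V) →ₗ[R] (⨂[R]^n V) :=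
  (PiTensorProduct.reindex R (fun _ : Fin n => V) σ).toLinearMap

/-- The functorial action of a linear map on the `n`-th tensor power. -/
def tmap {V W : Type u} [AddCommGroup V] [Module R V] [AddCommGroup W] [Module R W]
    (n : ℕ) (f : V →ₗ[R] W) : (⨂[R]^n V) →ₗ[R] (⨂[R]^n W) :=
  PiTensorProduct.map fun _ => f

/-- Auxiliary operators: `betaAux R V n c k` is the operator on `V^{⊗n}` which applies
the (signed, with signs `c`) left-normed bracketing to the first `k+1` tensor factors. -/
def betaAux (V : Type u) [AddCommGroup V] [Module R V] (n : ℕ) (c : ℕ → R) :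
    ℕ → ((⨂[R]^n V) →ₗ[R] (⨂[R]^n V))
  | 0 => LinearMap.id
  | k + 1 =>
    if h : k + 1 < n then
      (LinearMap.id - c (k + 1) • pact R V n (Fin.cycleRange ⟨k + 1, h⟩)) ∘ₗ
        betaAux V n c k
    else betaAux V n c k

/-- `β_n : V^{⊗n} → V^{⊗n}`, the linear map sending `a₁ ⊗ ⋯ ⊗ a_n` to the left-normed
iterated commutator `[[a₁,a₂],…,a_n]` (with `[a,b] = ab - ba`), regarded inside `V^{⊗n}`. -/
def beta (V : Type u) [AddCommGroup V] [Module R V] (n : ℕ) :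
    (⨂[R]^n V) →ₗ[R] (⨂[R]^n V) :=
  betaAux R V n (fun _ => 1) (n - 1)

/-- `L_n(V) = Im(β_n) ⊆ V^{⊗n}`. -/
def Lsub (V : Type u) [AddCommGroup V] [Module R V] (n : ℕ) : Submodule R (⨂[R]^n V) :=
  LinearMap.range (beta R V n)

variable {n : ℕ} {A : Type u} [AddCommGroup A] [Module R A]

/-- Given a basis `e` of the free module `V̄`, the word `e_{σ(1)} ⊗ ⋯ ⊗ e_{σ(n)}`. -/
def eword (b : Module.Basis (Fin n) R A) (σ : Equiv.Perm (Fin n)) : ⨂[R]^n A :=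
  tprod R fun i => b (σ i)

/-- `γ_n ⊆ V̄^{⊗n}`, the span of the words `e_{σ(1)} ⊗ ⋯ ⊗ e_{σ(n)}` for `σ ∈ Σ_n`. -/
def gammaN (b : Module.Basis (Fin n) R A) : Submodule R (⨂[R]^n A) :=
  Submodule.span R (Set.range (eword R b))

/-- The action of `σ ∈ Σ_n` on `V̄^{⊗n}` by permuting the letters `e_1, …, e_n`,
induced by the linear automorphism `e_i ↦ e_{σ(i)}` of `V̄`. -/
def lact (b : Module.Basis (Fin n) R A) (σ : Equiv.Perm (Fin n)) :
    (⨂[R]^n A) →ₗ[R] (⨂[R]^n A) :=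
  tmap R n (b.equiv b (σ : Fin n ≃ Fin n)).toLinearMap

/-- `Lie(n) = γ_n ∩ L_n(V̄)`. -/
def LieN (b : Module.Basis (Fin n) R A) : Submodule R (⨂[R]^n A) :=
  gammaN R b ⊓ Lsub R A n

/-- The coordinate functional on `V̄^{⊗n}` dual to the word `e_{w(1)} ⊗ ⋯ ⊗ e_{w(n)}`. -/
def lamb (b : Module.Basis (Fin n) R A) (w : Fin n → Fin n) : (⨂[R]^n A) →ₗ[R] R :=
  PiTensorProduct.lift
    ((MultilinearMap.mkPiAlgebra R (Fin n) R).compLinearMap fun i => b.coord (w i))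

/-- The substitution pairing `γ_n ⊗ V^{⊗n} → V^{⊗n}` (extended by zero off `γ_n`):
`(e_{σ(1)} ⊗ ⋯ ⊗ e_{σ(n)}) ⊗ (x_1 ⊗ ⋯ ⊗ x_n) ↦ x_{σ(1)} ⊗ ⋯ ⊗ x_{σ(n)}`,
realizing the canonical identification `γ_n ⊗_{R(Σ_n)} V^{⊗n} ≅ V^{⊗n}`. -/
def cpair (b : Module.Basis (Fin n) R A) (V : Type u) [AddCommGroup V] [Module R V] :
    (⨂[R]^n A) →ₗ[R] (⨂[R]^n V) →ₗ[R] (⨂[R]^n V) :=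
  ∑ σ : Equiv.Perm (Fin n), (lamb R b ⇑σ).smulRight (pact R V n σ⁻¹)

/-- The submodule of balancing relations defining `M ⊗_{R(Σ_n)} V^{⊗n}` for a
`Σ_n`-invariant submodule `M` of `V̄^{⊗n}` (where the right `R(Σ_n)`-module structure
on `M` is the letter action composed with inversion). -/
def relSpan (b : Module.Basis (Fin n) R A) (M : Submodule R (⨂[R]^n A))
    (V : Type u) [AddCommGroup V] [Module R V] :
    Submodule R (↥M ⊗[R] (⨂[R]^n V)) :=
  Submodule.span R
    {z | ∃ (σ : Equiv.Perm (Fin n)) (q : M) (h : lact R b σ ↑q ∈ M) (x : ⨂[R]^n V),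
      z = (⟨lact R b σ ↑q, h⟩ : M) ⊗ₜ[R] x - (q : ↥M) ⊗ₜ[R] (pact R V n σ⁻¹ x)}

section

variable {R} {V W : Type u} [AddCommGroup V] [Module R V] [AddCommGroup W] [Module R W]

lemma tensorPower_ext {M : Type*} [AddCommGroup M] [Module R M] {f g : (⨂[R]^n V) →ₗ[R] M}
    (h : ∀ a : Fin n → V, f (tprod R a) = g (tprod R a)) : f = g :=
  PiTensorProduct.ext (MultilinearMap.ext h)

@[simp]
lemma pact_tprod (σ : Equiv.Perm (Fin n)) (a : Fin n → V) :
    pact R V n σ (tprod R a) = tprod R (fun i => a (σ.symm i)) := by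
  simp [pact]

@[simp]
lemma tmap_tprod (f : V →ₗ[R] W) (a : Fin n → V) :
    tmap R n f (tprod R a) = tprod R (fun i => f (a i)) := by
  simp [tmap]

lemma pact_pact (σ τ : Equiv.Perm (Fin n)) (x : ⨂[R]^n V) :
    pact R V n σ (pact R V n τ x) = pact R V n (σ * τ) x := by
  rw [← LinearMap.comp_apply]
  congr 1
  exact tensorPower_ext fun a => by simp only [LinearMap.comp_apply, pact_tprod]; rfl

lemma tmap_pact (f : V →ₗ[R] W) (σ : Equiv.Perm (Fin n)) (x : ⨂[R]^n V) :
    tmap R n f (pact R V n σ x) = pact R W n σ (tmap R n f x) := by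
  rw [← LinearMap.comp_apply, ← LinearMap.comp_apply]
  congr 1
  exact tensorPower_ext fun a => by simp

lemma lamb_eq_coord (b : Module.Basis (Fin n) R A) (w : Fin n → Fin n) :
    lamb R b w = (Basis.piTensorProduct fun _ => b).coord w :=
  tensorPower_ext fun a => by simp [lamb]

lemma lamb_tprod (b : Module.Basis (Fin n) R A) (w : Fin n → Fin n) (a : Fin n → A) :
    lamb R b w (tprod R a) = ∏ i, b.coord (w i) (a i) := by
  simp [lamb]

lemma sum_lamb_smul_tprod (b : Module.Basis (Fin n) R A) (t : ⨂[R]^n A) :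
    ∑ w : Fin n → Fin n, lamb R b w t • tprod R (fun i => b (w i)) = t := by
  simpa [lamb_eq_coord] using (Basis.piTensorProduct fun _ => b).sum_repr t

lemma lamb_pact (b : Module.Basis (Fin n) R A) (w : Fin n → Fin n) (τ : Equiv.Perm (Fin n))
    (x : ⨂[R]^n A) : lamb R b w (pact R A n τ x) = lamb R b (w ∘ τ) x := by
  rw [← LinearMap.comp_apply]
  congr 1
  refine tensorPower_ext fun a => ?_
  simp only [LinearMap.comp_apply, pact_tprod, lamb_tprod, Function.comp]
  exact Fintype.prod_equiv τ.symm _ _ fun i => by simp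

lemma lamb_tmap_of_coord_comp (b : Module.Basis (Fin n) R A) (w : Fin n → Fin n)
    (f : A →ₗ[R] A) (hf : ∀ i, b.coord (w i) ∘ₗ f = b.coord (w i)) (x : ⨂[R]^n A) :
    lamb R b w (tmap R n f x) = lamb R b w x := by
  rw [← LinearMap.comp_apply]
  congr 1
  refine tensorPower_ext fun a => ?_
  simp only [LinearMap.comp_apply, tmap_tprod, lamb_tprod]
  exact Finset.prod_congr rfl fun i _ => DFunLike.congr_fun (hf i) (a i)

lemma cpair_apply (b : Module.Basis (Fin n) R A) (t : ⨂[R]^n A) (x : ⨂[R]^n V) :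
    cpair R b V t x = ∑ σ : Equiv.Perm (Fin n), lamb R b ⇑σ t • pact R V n σ⁻¹ x := by
  simp [cpair, LinearMap.sum_apply]

lemma tmap_cpair (b : Module.Basis (Fin n) R A) (f : V →ₗ[R] W) (t : ⨂[R]^n A)
    (x : ⨂[R]^n V) : tmap R n f (cpair R b V t x) = cpair R b W t (tmap R n f x) := by
  simp only [cpair_apply, map_sum, map_smul, tmap_pact]

lemma cpair_pact (b : Module.Basis (Fin n) R A) (τ : Equiv.Perm (Fin n)) (t : ⨂[R]^n A)
    (x : ⨂[R]^n V) :
    cpair R b V (pact R A n τ t) x = pact R V n τ (cpair R b V t x) := by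
  rw [cpair_apply, cpair_apply, map_sum]
  refine Fintype.sum_equiv (Equiv.mulRight τ) _ _ fun σ => ?_
  rw [lamb_pact, map_smul, pact_pact, Equiv.coe_mulRight, Equiv.Perm.coe_mul,
    show τ * (σ * τ)⁻¹ = σ⁻¹ by group]

lemma betaAux_cpair (b : Module.Basis (Fin n) R A) (c : ℕ → R) (k : ℕ) (t : ⨂[R]^n A)
    (x : ⨂[R]^n V) :
    cpair R b V (betaAux R A n c k t) x = betaAux R V n c k (cpair R b V t x) := by
  induction k with
  | zero => simp [betaAux]
  | succ k ih =>
    by_cases h : k + 1 < n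
    · simp only [betaAux, dif_pos h, LinearMap.comp_apply, LinearMap.sub_apply,
        LinearMap.id_apply, LinearMap.smul_apply, map_sub, map_smul, ih, cpair_pact]
    · simp only [betaAux, dif_neg h, ih]

lemma beta_cpair (b : Module.Basis (Fin n) R A) (t : ⨂[R]^n A) (x : ⨂[R]^n V) :
    cpair R b V (beta R A n t) x = beta R V n (cpair R b V t x) :=
  betaAux_cpair b _ _ t x

end

section Naturality

variable {R} (b : Module.Basis (Fin n) R A)
  {η : ∀ (V : Type u) [AddCommGroup V] [Module R V], (⨂[R]^n V) →ₗ[R] (⨂[R]^n V)}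

lemma lamb_eq_zero_of_not_surjective
    (hη : ∀ (V W : Type u) [AddCommGroup V] [Module R V] [AddCommGroup W] [Module R W]
      (f : V →ₗ[R] W), η W ∘ₗ tmap R n f = tmap R n f ∘ₗ η V)
    {w : Fin n → Fin n} (hw : ¬ Function.Surjective w) :
    lamb R b w (η A (tprod R b)) = 0 := by
  obtain ⟨m, hm⟩ : ∃ m, ∀ i, w i ≠ m := by
    simpa [Function.Surjective, not_forall, eq_comm] using hw
  let f : A →ₗ[R] A := b.constr ℕ (Function.update b m 0)
  have hf : tmap R n f (tprod R b) = 0 :=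
    (tmap_tprod f b).trans <| MultilinearMap.map_coord_zero _ m (by simp [f])
  have hcoord : ∀ i, b.coord (w i) ∘ₗ f = b.coord (w i) := fun i =>
    b.ext fun j => by
      rcases eq_or_ne j m with rfl | hj
      · simp [f, Module.Basis.coord_apply, hm i]
      · simp [f, hj]
  calc lamb R b w (η A (tprod R b))
      = lamb R b w (tmap R n f (η A (tprod R b))) :=
        (lamb_tmap_of_coord_comp b w f hcoord _).symm
    _ = 0 := by rw [← LinearMap.comp_apply (tmap R n f), ← hη, LinearMap.comp_apply, hf,
      map_zero, map_zero]

lemma cpair_tprod_basis_of_lamb_eq_zero {t : ⨂[R]^n A}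
    (ht : ∀ w : Fin n → Fin n, ¬ Function.Surjective w → lamb R b w t = 0) :
    cpair R b A t (tprod R b) = t := by
  calc cpair R b A t (tprod R b)
      = ∑ σ : Equiv.Perm (Fin n), lamb R b ⇑σ t • tprod R (fun i => b (σ i)) := by
        simp [cpair_apply, Equiv.Perm.inv_def]
    _ = ∑ w : Fin n → Fin n, lamb R b w t • tprod R (fun i => b (w i)) := by
        refine Finset.sum_of_injOn (⇑) DFunLike.coe_injective.injOn (by simp [Set.MapsTo])
          (fun w _ hw => ?_) (fun _ _ => rfl)
        rw [ht w fun hs => hw ?_, zero_smul]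
        exact ⟨Equiv.ofBijective w (Finite.surjective_iff_bijective.mp hs), by simp, rfl⟩
    _ = t := sum_lamb_smul_tprod b t

lemma eq_cpair_of_natural
    (hη : ∀ (V W : Type u) [AddCommGroup V] [Module R V] [AddCommGroup W] [Module R W]
      (f : V →ₗ[R] W), η W ∘ₗ tmap R n f = tmap R n f ∘ₗ η V)
    (V : Type u) [AddCommGroup V] [Module R V] (x : ⨂[R]^n V) :
    η V x = cpair R b V (η A (tprod R b)) x := by
  refine DFunLike.congr_fun (tensorPower_ext fun a => ?_) x
  let f : A →ₗ[R] V := b.constr ℕ a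
  have hf : tmap R n f (tprod R b) = tprod R a := by simp [f]
  calc η V (tprod R a) = tmap R n f (η A (tprod R b)) := by
        rw [← hf, ← LinearMap.comp_apply, hη, LinearMap.comp_apply]
    _ = tmap R n f (cpair R b A (η A (tprod R b)) (tprod R b)) := by
        rw [cpair_tprod_basis_of_lamb_eq_zero b fun w hw => lamb_eq_zero_of_not_surjective b hη hw]
    _ = cpair R b V (η A (tprod R b)) (tprod R a) := by rw [tmap_cpair, hf]

end Naturality

theorem statement6_general (R : Type u) [CommRing R] (n : ℕ)
    (Q : ∀ (V : Type u) [AddCommGroup V] [Module R V], Type u)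
    [∀ (V : Type u) [AddCommGroup V] [Module R V], AddCommGroup (Q V)]
    [∀ (V : Type u) [AddCommGroup V] [Module R V], Module R (Q V)]
    (Qmap : ∀ (V W : Type u) [AddCommGroup V] [Module R V] [AddCommGroup W] [Module R W],
      (V →ₗ[R] W) → (Q V →ₗ[R] Q W))
    (s : ∀ (V : Type u) [AddCommGroup V] [Module R V], Q V →ₗ[R] ⨂[R]^n V)
    (hs : ∀ (V W : Type u) [AddCommGroup V] [Module R V] [AddCommGroup W] [Module R W]
      (f : V →ₗ[R] W), (s W) ∘ₗ (Qmap V W f) = (tmap R n f) ∘ₗ (s V))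
    (r : ∀ (V : Type u) [AddCommGroup V] [Module R V], (⨂[R]^n V) →ₗ[R] Q V)
    (hr : ∀ (V W : Type u) [AddCommGroup V] [Module R V] [AddCommGroup W] [Module R W]
      (f : V →ₗ[R] W), (r W) ∘ₗ (tmap R n f) = (Qmap V W f) ∘ₗ (r V))
    (hrs : ∀ (V : Type u) [AddCommGroup V] [Module R V], (r V) ∘ₗ (s V) = LinearMap.id)
    (φ : ∀ (V : Type u) [AddCommGroup V] [Module R V], Q V →ₗ[R] ↥(Lsub R V n))
    (hφ : ∀ (V W : Type u) [AddCommGroup V] [Module R V] [AddCommGroup W] [Module R W]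
      (f : V →ₗ[R] W) (y : Q V),
      (↑(φ W (Qmap V W f y)) : ⨂[R]^n W) = tmap R n f ↑(φ V y)) :
    ∃ ψ : ∀ (V : Type u) [AddCommGroup V] [Module R V], Q V →ₗ[R] ⨂[R]^n V,
      (∀ (V W : Type u) [AddCommGroup V] [Module R V] [AddCommGroup W] [Module R W]
        (f : V →ₗ[R] W), (ψ W) ∘ₗ (Qmap V W f) = (tmap R n f) ∘ₗ (ψ V)) ∧
      (∀ (V : Type u) [AddCommGroup V] [Module R V] (y : Q V),
        (↑(φ V y) : ⨂[R]^n V) = beta R V n (ψ V y)) := by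
  let b := Pi.basisFun R (Fin n)
  let η : ∀ (V : Type u) [AddCommGroup V] [Module R V], (⨂[R]^n V) →ₗ[R] (⨂[R]^n V) :=
    fun V _ _ => (Lsub R V n).subtype ∘ₗ φ V ∘ₗ r V
  have hη : ∀ (V W : Type u) [AddCommGroup V] [Module R V] [AddCommGroup W] [Module R W]
      (f : V →ₗ[R] W), η W ∘ₗ tmap R n f = tmap R n f ∘ₗ η V := fun V W _ _ _ _ f =>
    LinearMap.ext fun x => by simp [η, ← hφ, ← LinearMap.comp_apply (r W), hr]
  obtain ⟨u, hu⟩ : ∃ u, beta R _ n u = η _ (tprod R b) := (φ _ (r _ (tprod R b))).2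
  refine ⟨fun V _ _ => cpair R b V u ∘ₗ s V, fun V W _ _ _ _ f => ?_, fun V _ _ y => ?_⟩
  · rw [LinearMap.comp_assoc, hs, ← LinearMap.comp_assoc, ← LinearMap.comp_assoc]
    exact congrArg (· ∘ₗ s V) (LinearMap.ext fun x => (tmap_cpair b f u x).symm)
  · calc (φ V y : ⨂[R]^n V) = η V (s V y) := by simp [η, ← LinearMap.comp_apply (r V), hrs]
      _ = beta R V n (cpair R b V u (s V y)) := by
        rw [eq_cpair_of_natural b hη, ← hu, beta_cpair]

/-- Let `Q` be a `T_n`-projective functor (a functor from `R`-modules to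
`R`-modules which is a retract of `T_n : V ↦ V^{⊗n}` via natural transformations `s, r`
with `r ∘ s = id`) and let `φ : Q → L_n` be a natural linear transformation.  Then there
exists a natural linear transformation `φ̃ : Q → T_n` with `φ = β_n ∘ φ̃`. -/
theorem statement6 (R : Type u) [CommRing R] (n : ℕ) (hn : 2 ≤ n)
    (Q : ∀ (V : Type u) [AddCommGroup V] [Module R V], Type u)
    [∀ (V : Type u) [AddCommGroup V] [Module R V], AddCommGroup (Q V)]
    [∀ (V : Type u) [AddCommGroup V] [Module R V], Module R (Q V)]
    (Qmap : ∀ (V W : Type u) [AddCommGroup V] [Module R V] [AddCommGroup W] [Module R W],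
      (V →ₗ[R] W) → (Q V →ₗ[R] Q W))
    (Qmap_id : ∀ (V : Type u) [AddCommGroup V] [Module R V],
      Qmap V V LinearMap.id = LinearMap.id)
    (Qmap_comp : ∀ (U V W : Type u) [AddCommGroup U] [Module R U] [AddCommGroup V]
      [Module R V] [AddCommGroup W] [Module R W] (f : U →ₗ[R] V) (g : V →ₗ[R] W),
      Qmap U W (g ∘ₗ f) = (Qmap V W g) ∘ₗ (Qmap U V f))
    (s : ∀ (V : Type u) [AddCommGroup V] [Module R V], Q V →ₗ[R] ⨂[R]^n V)
    (hs : ∀ (V W : Type u) [AddCommGroup V] [Module R V] [AddCommGroup W] [Module R W]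
      (f : V →ₗ[R] W), (s W) ∘ₗ (Qmap V W f) = (tmap R n f) ∘ₗ (s V))
    (r : ∀ (V : Type u) [AddCommGroup V] [Module R V], (⨂[R]^n V) →ₗ[R] Q V)
    (hr : ∀ (V W : Type u) [AddCommGroup V] [Module R V] [AddCommGroup W] [Module R W]
      (f : V →ₗ[R] W), (r W) ∘ₗ (tmap R n f) = (Qmap V W f) ∘ₗ (r V))
    (hrs : ∀ (V : Type u) [AddCommGroup V] [Module R V], (r V) ∘ₗ (s V) = LinearMap.id)
    (φ : ∀ (V : Type u) [AddCommGroup V] [Module R V], Q V →ₗ[R] ↥(Lsub R V n))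
    (hφ : ∀ (V W : Type u) [AddCommGroup V] [Module R V] [AddCommGroup W] [Module R W]
      (f : V →ₗ[R] W) (y : Q V),
      (↑(φ W (Qmap V W f y)) : ⨂[R]^n W) = tmap R n f ↑(φ V y)) :
    ∃ ψ : ∀ (V : Type u) [AddCommGroup V] [Module R V], Q V →ₗ[R] ⨂[R]^n V,
      (∀ (V W : Type u) [AddCommGroup V] [Module R V] [AddCommGroup W] [Module R W]
        (f : V →ₗ[R] W), (ψ W) ∘ₗ (Qmap V W f) = (tmap R n f) ∘ₗ (ψ V)) ∧
      (∀ (V : Type u) [AddCommGroup V] [Module R V] (y : Q V),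
        (↑(φ V y) : ⨂[R]^n V) = beta R V n (ψ V y)) :=
  statement6_general R n Q Qmap s hs r hr hrs φ hφ

end
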